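/- arXiv:2603.23926 — 6 statements merged into one kernel-verified Lean document; each statement's English description precedes it below -/
import Mathlib

section
/- The clipped optimistic empirical Bellman operator satisfies the constant-shift property: for every Q : S×A → ℝ and every constant c ∈ ℝ, (T̂(Q + c·1))(s,a) = (T̂Q)(s,a) + γ·c for all (s,a) ∈ S×A, where 1 denotes the all-ones function on S×A. -/
open Finset

/-- Dot product of a probability vector `p` with a value vector `v`. -/
noncomputable def probDot {S : Type*} [Fintype S] (p v : S → ℝ) : ℝ :=
  ∑ s, p s * v s

/-- Variance of `v` under the probability vector `p`. -/
noncomputable def probVar {S : Type*} [Fintype S] (p v : S → ℝ) : ℝ :=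
  (∑ s, p s * (v s) ^ 2) - (probDot p v) ^ 2

/-- `(MQ)(s) = max_a Q(s,a)`. -/
noncomputable def maxOp {S A : Type*} [Fintype A] [Nonempty A] (Q : S → A → ℝ) (s : S) : ℝ :=
  Finset.univ.sup' Finset.univ_nonempty (Q s)

/-- `Clip_H(V)(s) = min (V s) (min_{s'} V s' + H)`. -/
noncomputable def clipOp {S : Type*} [Fintype S] [Nonempty S] (H : ℝ) (V : S → ℝ) (s : S) : ℝ :=
  min (V s) (Finset.univ.inf' Finset.univ_nonempty V + H)

/-- The exploration bonus `b(s,a,V)`. -/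
noncomputable def bonus {S A : Type*} [Fintype S] (Phat : S → A → S → ℝ)
    (cnt : S → A → ℝ) (U H : ℝ) (s : S) (a : A) (V : S → ℝ) : ℝ :=
  max (4 * Real.sqrt (probVar (Phat s a) V * U / cnt s a)) (32 * H * U / cnt s a)

/-- The clipped optimistic empirical Bellman operator `T̂`. -/
noncomputable def bellmanOp {S A : Type*} [Fintype S] [Fintype A] [Nonempty S] [Nonempty A]
    (γ H U : ℝ) (r : S → A → ℝ) (cnt : S → A → ℝ) (Phat : S → A → S → ℝ)
    (Q : S → A → ℝ) : S → A → ℝ := fun s a =>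
  r s a + γ * probDot (Phat s a) (clipOp H (maxOp Q))
    + γ * bonus Phat cnt U H s a (clipOp H (maxOp Q))

lemma sup'_add_const {A : Type*} [Fintype A] [Nonempty A] (f : A → ℝ) (c : ℝ) :
    Finset.univ.sup' Finset.univ_nonempty (fun a => f a + c)
      = Finset.univ.sup' Finset.univ_nonempty f + c :=
  (comp_sup'_eq_sup'_comp Finset.univ_nonempty (fun x : ℝ => x + c)
    (fun x y => by simp [max_add_add_right])).symm

lemma inf'_add_const {A : Type*} [Fintype A] [Nonempty A] (f : A → ℝ) (c : ℝ) :
    Finset.univ.inf' Finset.univ_nonempty (fun a => f a + c)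
      = Finset.univ.inf' Finset.univ_nonempty f + c :=
  (apply_inf'_eq_inf'_comp Finset.univ_nonempty (fun x : ℝ => x + c)
    (fun x y => by simp [min_add_add_right])).symm

lemma maxOp_shift {S A : Type*} [Fintype A] [Nonempty A] (Q : S → A → ℝ) (c : ℝ) :
    maxOp (fun s a => Q s a + c) = fun s => maxOp Q s + c := by
  funext s; exact sup'_add_const (Q s) c

lemma clipOp_shift {S : Type*} [Fintype S] [Nonempty S] (H : ℝ) (V : S → ℝ) (c : ℝ) :
    clipOp H (fun s => V s + c) = fun s => clipOp H V s + c := by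
  funext s
  simp only [clipOp, inf'_add_const]
  rw [show Finset.univ.inf' Finset.univ_nonempty V + c + H
      = Finset.univ.inf' Finset.univ_nonempty V + H + c by ring, min_add_add_right]

lemma probDot_shift {S : Type*} [Fintype S] (p V : S → ℝ) (c : ℝ)
    (hp : ∑ s, p s = 1) :
    probDot p (fun s => V s + c) = probDot p V + c := by
  simp only [probDot, mul_add, Finset.sum_add_distrib, ← Finset.sum_mul, hp]
  ring

lemma probVar_shift {S : Type*} [Fintype S] (p V : S → ℝ) (c : ℝ)
    (hp : ∑ s, p s = 1) :
    probVar p (fun s => V s + c) = probVar p V := by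
  simp only [probVar, probDot_shift p V c hp]
  have : ∑ s, p s * (V s + c) ^ 2
      = ∑ s, p s * V s ^ 2 + 2 * c * ∑ s, p s * V s + c ^ 2 := by
    have e1 : ∀ s, p s * (V s + c) ^ 2
        = p s * V s ^ 2 + 2 * c * (p s * V s) + c ^ 2 * p s := fun s => by ring
    simp only [e1, Finset.sum_add_distrib, ← Finset.mul_sum, hp]
    ring
  rw [this]
  simp only [probDot]
  ring

/-- Constant-shift property of the clipped optimistic empirical Bellman operator:
`T̂(Q + c·1) = T̂Q + γ·c` pointwise. -/
theorem bellmanOp_const_shift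
    {S A : Type*} [Fintype S] [Fintype A] [Nonempty S] [Nonempty A]
    (γ H U : ℝ) (hγ₀ : 0 < γ) (hγ₁ : γ < 1) (hH : 0 ≤ H) (hU : 0 < U)
    (r : S → A → ℝ) (hr : ∀ s a, r s a ∈ Set.Icc (0 : ℝ) 1)
    (cnt : S → A → ℝ) (hcnt : ∀ s a, 1 ≤ cnt s a)
    (Phat : S → A → S → ℝ)
    (hPnonneg : ∀ s a s', 0 ≤ Phat s a s')
    (hPle : ∀ s a s', Phat s a s' ≤ 1)
    (hPsum : ∀ s a, ∑ s', Phat s a s' = 1)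
    (Q : S → A → ℝ) (c : ℝ) :
    ∀ s a, bellmanOp γ H U r cnt Phat (fun s a => Q s a + c) s a
      = bellmanOp γ H U r cnt Phat Q s a + γ * c := by
  intro s a
  have hclip : clipOp H (maxOp fun s a => Q s a + c)
      = fun s' => clipOp H (maxOp Q) s' + c := by
    rw [maxOp_shift, clipOp_shift]
  simp only [bellmanOp, hclip, bonus,
    probDot_shift (Phat s a) (clipOp H (maxOp Q)) c (hPsum s a),
    probVar_shift (Phat s a) (clipOp H (maxOp Q)) c (hPsum s a)]
  ring
end

section
/- The clipped optimistic empirical Bellman operator is monotone: for all Q, Q' : S×A → ℝ, if (MQ)(s) ≥ (MQ')(s) for every s ∈ S, then (T̂Q)(s,a) ≥ (T̂Q')(s,a) for every (s,a) ∈ S×A. In particular, Q ≥ Q' pointwise implies T̂Q ≥ T̂Q' pointwise. -/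
open Finset

section Aux

open Finset

variable {S : Type*} [Fintype S]

lemma probVar_nonneg (p v : S → ℝ) (hp : ∀ s, 0 ≤ p s) (hps : ∑ s, p s = 1) :
    0 ≤ probVar p v := by
  have h := Finset.sum_mul_sq_le_sq_mul_sq Finset.univ
    (fun s => Real.sqrt (p s)) (fun s => Real.sqrt (p s) * v s)
  have e1 : (∑ s, Real.sqrt (p s) * (Real.sqrt (p s) * v s)) = probDot p v := by
    refine Finset.sum_congr rfl fun s _ => ?_
    rw [← mul_assoc, Real.mul_self_sqrt (hp s)]
  have e2 : (∑ s, Real.sqrt (p s) ^ 2) = 1 := by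
    rw [← hps]; exact Finset.sum_congr rfl fun s _ => Real.sq_sqrt (hp s)
  have e3 : (∑ s, (Real.sqrt (p s) * v s) ^ 2) = ∑ s, p s * v s ^ 2 := by
    refine Finset.sum_congr rfl fun s _ => ?_
    rw [mul_pow, Real.sq_sqrt (hp s)]
  rw [e1, e2, e3, one_mul] at h
  simpa [probVar] using h

/-- Key inequality: the clipped optimistic value plus bonus is monotone. -/
lemma key_ineq (p V V' : S → ℝ) (K H : ℝ) (hK : 0 ≤ K) (hH : 0 ≤ H)
    (hp : ∀ s, 0 ≤ p s) (hps : ∑ s, p s = 1)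
    (hle : ∀ s, V' s ≤ V s)
    (hrV : ∀ s t, V s - V t ≤ H) (hrV' : ∀ s t, V' s - V' t ≤ H) :
    probDot p V' + max (4 * Real.sqrt (probVar p V' * K)) (32 * H * K)
      ≤ probDot p V + max (4 * Real.sqrt (probVar p V * K)) (32 * H * K) := by
  set μ := probDot p V with hμ
  set μ' := probDot p V' with hμ'
  have hd : μ' ≤ μ := by
    refine Finset.sum_le_sum fun s _ => mul_le_mul_of_nonneg_left (hle s) (hp s)
  set d : ℝ := μ - μ' with hdd
  have hd0 : 0 ≤ d := by simp [hdd]; linarith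
  -- mean is within H of every value
  have hmeanV : ∀ s, μ - V s ≤ H := by
    intro s
    have : μ - V s = ∑ t, p t * (V t - V s) := by
      simp only [mul_sub, Finset.sum_sub_distrib, ← Finset.sum_mul, hps, hμ, probDot]
      ring
    rw [this]
    calc (∑ t, p t * (V t - V s)) ≤ ∑ t, p t * H :=
          Finset.sum_le_sum fun t _ => mul_le_mul_of_nonneg_left (hrV t s) (hp t)
      _ = H := by rw [← Finset.sum_mul, hps, one_mul]
  have hmeanV' : ∀ s, μ' - V' s ≤ H := by
    intro s
    have : μ' - V' s = ∑ t, p t * (V' t - V' s) := by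
      simp only [mul_sub, Finset.sum_sub_distrib, ← Finset.sum_mul, hps, hμ', probDot]
      ring
    rw [this]
    calc (∑ t, p t * (V' t - V' s)) ≤ ∑ t, p t * H :=
          Finset.sum_le_sum fun t _ => mul_le_mul_of_nonneg_left (hrV' t s) (hp t)
      _ = H := by rw [← Finset.sum_mul, hps, one_mul]
  -- variance difference bound
  have hVarDiff : probVar p V' - probVar p V ≤ 2 * H * d := by
    have hexp : probVar p V' - probVar p V
        = ∑ s, p s * (V s - V' s) * ((μ - V s) + (μ' - V' s)) := by
      have h1 : probVar p V' - probVar p V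
          = (∑ s, (p s * V' s ^ 2 - p s * V s ^ 2)) + (μ ^ 2 - μ' ^ 2) := by
        simp only [probVar, Finset.sum_sub_distrib, hμ, hμ']; ring
      have h2 : μ ^ 2 - μ' ^ 2 = ∑ s, p s * (V s - V' s) * (μ + μ') := by
        have : (∑ s, p s * (V s - V' s) * (μ + μ')) = (μ - μ') * (μ + μ') := by
          rw [← Finset.sum_mul]
          congr 1
          simp only [hμ, hμ', probDot, mul_sub, Finset.sum_sub_distrib]
        rw [this]; ring
      rw [h1, h2, ← Finset.sum_add_distrib]
      exact Finset.sum_congr rfl fun s _ => by ring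
    rw [hexp]
    calc (∑ s, p s * (V s - V' s) * ((μ - V s) + (μ' - V' s)))
        ≤ ∑ s, p s * (V s - V' s) * (2 * H) := by
          refine Finset.sum_le_sum fun s _ => ?_
          have hnn : 0 ≤ p s * (V s - V' s) := mul_nonneg (hp s) (by linarith [hle s])
          exact mul_le_mul_of_nonneg_left (by linarith [hmeanV s, hmeanV' s]) hnn
      _ = 2 * H * d := by
          rw [← Finset.sum_mul]
          have : (∑ s, p s * (V s - V' s)) = d := by
            simp only [hdd, hμ, hμ', probDot, mul_sub, Finset.sum_sub_distrib]
          rw [this]; ring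
  -- now the max comparison
  have hmax : max (4 * Real.sqrt (probVar p V' * K)) (32 * H * K)
      ≤ max (4 * Real.sqrt (probVar p V * K)) (32 * H * K) + d := by
    refine max_le ?_ (by linarith [le_max_right (4 * Real.sqrt (probVar p V * K)) (32 * H * K)])
    by_cases hcase : 4 * Real.sqrt (probVar p V' * K) ≤ 32 * H * K
    · linarith [le_max_right (4 * Real.sqrt (probVar p V * K)) (32 * H * K)]
    push_neg at hcase
    by_cases hvv : probVar p V' ≤ probVar p V
    · have : Real.sqrt (probVar p V' * K) ≤ Real.sqrt (probVar p V * K) :=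
        Real.sqrt_le_sqrt (mul_le_mul_of_nonneg_right hvv hK)
      have := le_max_left (4 * Real.sqrt (probVar p V * K)) (32 * H * K)
      linarith
    push_neg at hvv
    -- hard case
    set a : ℝ := probVar p V * K with ha
    set a' : ℝ := probVar p V' * K with ha'
    have haK : 0 ≤ a := mul_nonneg (probVar_nonneg p V hp hps) hK
    have ha'K : a ≤ a' := mul_le_mul_of_nonneg_right (le_of_lt hvv) hK
    have hsq : 0 < Real.sqrt a' := by
      rcases lt_or_ge 0 (Real.sqrt a') with h | h
      · exact h
      · exfalso
        have : Real.sqrt a' = 0 := le_antisymm h (Real.sqrt_nonneg _)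
        rw [this] at hcase
        have : (0:ℝ) ≤ 32 * H * K := by positivity
        linarith
    have hHK : 8 * H * K < Real.sqrt a' := by linarith
    have hHpos : 0 < H * K := by
      by_contra hcon
      push_neg at hcon
      have hHK0 : H * K = 0 := le_antisymm hcon (mul_nonneg hH hK)
      -- then probVar p V' - probVar p V ≤ 0, contradiction with hvv... unless K = 0
      rcases mul_eq_zero.mp hHK0 with h0 | h0
      · -- H = 0
        have : probVar p V' - probVar p V ≤ 0 := by
          calc probVar p V' - probVar p V ≤ 2 * H * d := hVarDiff
            _ = 0 := by rw [h0]; ring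
        linarith
      · -- K = 0
        have : a' = 0 := by rw [ha', h0, mul_zero]
        rw [this, Real.sqrt_zero] at hsq
        exact lt_irrefl 0 hsq
    -- √a' - √a ≤ (a' - a)/√a'
    have hstep : Real.sqrt a' - Real.sqrt a ≤ (a' - a) / Real.sqrt a' := by
      have h1 : a / Real.sqrt a' ≤ Real.sqrt a := by
        rw [div_le_iff₀ hsq]
        calc a = Real.sqrt (a * a) := (Real.sqrt_mul_self haK).symm
          _ ≤ Real.sqrt (a * a') := Real.sqrt_le_sqrt (mul_le_mul_of_nonneg_left ha'K haK)
          _ = Real.sqrt a * Real.sqrt a' := Real.sqrt_mul haK a'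
      have h2 : (a' - a) / Real.sqrt a' = Real.sqrt a' - a / Real.sqrt a' := by
        rw [sub_div]
        congr 1
        rw [div_eq_iff (ne_of_gt hsq), Real.mul_self_sqrt (le_trans haK ha'K)]
      rw [h2]; linarith
    have hnum : a' - a ≤ 2 * H * K * d := by
      have : a' - a = (probVar p V' - probVar p V) * K := by rw [ha, ha']; ring
      rw [this]
      calc (probVar p V' - probVar p V) * K ≤ (2 * H * d) * K :=
            mul_le_mul_of_nonneg_right hVarDiff hK
        _ = 2 * H * K * d := by ring
    have hfrac : (a' - a) / Real.sqrt a' ≤ d / 4 := by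
      rw [div_le_iff₀ hsq]
      have h8 : (0:ℝ) < 8 * H * K := by linarith
      calc a' - a ≤ 2 * H * K * d := hnum
        _ = d / 4 * (8 * H * K) := by ring
        _ ≤ d / 4 * Real.sqrt a' :=
            mul_le_mul_of_nonneg_left (le_of_lt hHK) (by linarith)
    have : 4 * Real.sqrt a' ≤ 4 * Real.sqrt a + d := by
      have := hstep.trans hfrac
      linarith
    calc 4 * Real.sqrt a' ≤ 4 * Real.sqrt a + d := this
      _ ≤ max (4 * Real.sqrt a) (32 * H * K) + d := by
          linarith [le_max_left (4 * Real.sqrt a) (32 * H * K)]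
  linarith

variable [Nonempty S]

lemma clipOp_mono (H : ℝ) (V V' : S → ℝ) (h : ∀ s, V' s ≤ V s) (s : S) :
    clipOp H V' s ≤ clipOp H V s := by
  unfold clipOp
  refine min_le_min (h s) (add_le_add_left ?_ H)
  refine Finset.le_inf' _ _ fun t _ => ?_
  exact le_trans (Finset.inf'_le _ (Finset.mem_univ t)) (h t)

lemma clipOp_range (H : ℝ) (hH : 0 ≤ H) (V : S → ℝ) (s t : S) :
    clipOp H V s - clipOp H V t ≤ H := by
  unfold clipOp
  have h1 : min (V s) (Finset.univ.inf' Finset.univ_nonempty V + H)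
      ≤ Finset.univ.inf' Finset.univ_nonempty V + H := min_le_right _ _
  have h2 : Finset.univ.inf' Finset.univ_nonempty V ≤ V t :=
    Finset.inf'_le _ (Finset.mem_univ t)
  have h3 : Finset.univ.inf' Finset.univ_nonempty V
      ≤ Finset.univ.inf' Finset.univ_nonempty V + H := by linarith
  have := le_min h2 h3
  linarith [h1, this]

end Aux

/-- Monotonicity of the clipped optimistic empirical Bellman operator:
if `MQ ≥ MQ'` pointwise then `T̂Q ≥ T̂Q'` pointwise; in particular `Q ≥ Q'`
pointwise implies `T̂Q ≥ T̂Q'` pointwise. -/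
theorem bellmanOp_monotone
    {S A : Type*} [Fintype S] [Fintype A] [Nonempty S] [Nonempty A]
    (γ H U : ℝ) (hγ₀ : 0 < γ) (hγ₁ : γ < 1) (hH : 0 ≤ H) (hU : 0 < U)
    (r : S → A → ℝ) (hr : ∀ s a, r s a ∈ Set.Icc (0 : ℝ) 1)
    (cnt : S → A → ℝ) (hcnt : ∀ s a, 1 ≤ cnt s a)
    (Phat : S → A → S → ℝ)
    (hPnonneg : ∀ s a s', 0 ≤ Phat s a s')
    (hPle : ∀ s a s', Phat s a s' ≤ 1)
    (hPsum : ∀ s a, ∑ s', Phat s a s' = 1) :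
    (∀ Q Q' : S → A → ℝ, (∀ s, maxOp Q' s ≤ maxOp Q s) →
      ∀ s a, bellmanOp γ H U r cnt Phat Q' s a ≤ bellmanOp γ H U r cnt Phat Q s a)
    ∧
    (∀ Q Q' : S → A → ℝ, (∀ s a, Q' s a ≤ Q s a) →
      ∀ s a, bellmanOp γ H U r cnt Phat Q' s a ≤ bellmanOp γ H U r cnt Phat Q s a) := by
  have hKpos : ∀ s a, (0:ℝ) < U / cnt s a := fun s a =>
    div_pos hU (lt_of_lt_of_le one_pos (hcnt s a))
  have main : ∀ Q Q' : S → A → ℝ, (∀ s, maxOp Q' s ≤ maxOp Q s) →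
      ∀ s a, bellmanOp γ H U r cnt Phat Q' s a ≤ bellmanOp γ H U r cnt Phat Q s a := by
    intro Q Q' h s a
    have hclip : ∀ t, clipOp H (maxOp Q') t ≤ clipOp H (maxOp Q) t :=
      clipOp_mono H (maxOp Q) (maxOp Q') h
    have key := key_ineq (S := S) (Phat s a) (clipOp H (maxOp Q)) (clipOp H (maxOp Q'))
      (U / cnt s a) H (le_of_lt (hKpos s a)) hH (hPnonneg s a) (hPsum s a) hclip
      (clipOp_range H hH (maxOp Q)) (clipOp_range H hH (maxOp Q'))
    unfold bellmanOp bonus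
    rw [mul_div_assoc (probVar (Phat s a) (clipOp H (maxOp Q))) U (cnt s a),
        mul_div_assoc (probVar (Phat s a) (clipOp H (maxOp Q'))) U (cnt s a),
        mul_div_assoc (32 * H) U (cnt s a)]
    have := mul_le_mul_of_nonneg_left key (le_of_lt hγ₀)
    nlinarith [this]
  refine ⟨main, fun Q Q' h => main Q Q' fun s => ?_⟩
  exact Finset.sup'_le _ _ fun a _ =>
    le_trans (h s a) (Finset.le_sup' (Q s) (Finset.mem_univ a))
end

section
/- Optimism of the clipped optimistic empirical Bellman operator at the true optimal Q-function: suppose max_{s∈S}(MQ*)(s) − min_{s∈S}(MQ*)(s) ≤ H, and suppose the concentration condition |(P̂_{s,a} − P_{s,a})·(MQ*)| ≤ 2√(𝕍(P̂_{s,a}, MQ*)·U/n(s,a)) + 14HU/(3·n(s,a)) holds for all (s,a) ∈ S×A. Then Q*(s,a) ≤ (T̂Q*)(s,a) for all (s,a) ∈ S×A. -/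
open Finset

/-!
The span condition `max MQ* - min MQ* ≤ H` makes the clipping inactive at `MQ*`, so `T̂Q*` is the
empirical backup of `MQ*` plus the bonus. The bonus is at least the concentration width, hence
at least the error of replacing `P` by `P̂`; so `T̂Q*` dominates the exact backup, which is `Q*`.
-/

lemma clipOp_eq_self_of_span_le {S : Type*} [Fintype S] [Nonempty S] {H : ℝ} {V : S → ℝ}
    (h : univ.sup' univ_nonempty V - univ.inf' univ_nonempty V ≤ H) : clipOp H V = V :=
  funext fun s => min_eq_left (by linarith [le_sup' V (mem_univ s)])

lemma two_mul_sqrt_add_le_bonus {S A : Type*} [Fintype S] (Phat : S → A → S → ℝ)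
    (cnt : S → A → ℝ) {U H : ℝ} (s : S) (a : A) (V : S → ℝ)
    (hH : 0 ≤ H) (hU : 0 ≤ U) (hcnt : 0 ≤ cnt s a) :
    2 * √(probVar (Phat s a) V * U / cnt s a) + 14 * H * U / (3 * cnt s a)
      ≤ bonus Phat cnt U H s a V := by
  set x := √(probVar (Phat s a) V * U / cnt s a)
  set y := H * U / cnt s a
  have hy : 0 ≤ y := by positivity
  have h14 : 14 * H * U / (3 * cnt s a) = 14 / 3 * y := by ring
  have h32 : 32 * H * U / cnt s a = 32 * y := by ring
  rw [bonus, h14, h32]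
  linarith [le_max_left (4 * x) (32 * y), le_max_right (4 * x) (32 * y)]

theorem bellmanOp_optimism_general
    {S A : Type*} [Fintype S] [Fintype A] [Nonempty S] [Nonempty A]
    (γ H U : ℝ) (hγ₀ : 0 < γ) (hH : 0 ≤ H) (hU : 0 < U)
    (r : S → A → ℝ)
    (cnt : S → A → ℝ) (hcnt : ∀ s a, 1 ≤ cnt s a)
    (Phat : S → A → S → ℝ)
    (P : S → A → S → ℝ)
    (Qstar : S → A → ℝ)
    (hBellman : ∀ s a, Qstar s a = r s a + γ * probDot (P s a) (maxOp Qstar))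
    (hspan : Finset.univ.sup' Finset.univ_nonempty (maxOp Qstar)
        - Finset.univ.inf' Finset.univ_nonempty (maxOp Qstar) ≤ H)
    (hconc : ∀ s a,
      |probDot (Phat s a) (maxOp Qstar) - probDot (P s a) (maxOp Qstar)|
        ≤ 2 * Real.sqrt (probVar (Phat s a) (maxOp Qstar) * U / cnt s a)
          + 14 * H * U / (3 * cnt s a)) :
    ∀ s a, Qstar s a ≤ bellmanOp γ H U r cnt Phat Qstar s a := by
  intro s a
  set V := maxOp Qstar
  have hcnt₀ : 0 ≤ cnt s a := zero_le_one.trans (hcnt s a)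
  have hdev : probDot (P s a) V - probDot (Phat s a) V ≤ bonus Phat cnt U H s a V :=
    (le_abs_self _).trans <| (abs_sub_comm _ _).trans_le <|
      (hconc s a).trans (two_mul_sqrt_add_le_bonus Phat cnt s a V hH hU.le hcnt₀)
  have hγdev := mul_le_mul_of_nonneg_left hdev hγ₀.le
  rw [hBellman s a, bellmanOp, clipOp_eq_self_of_span_le hspan]
  linarith

/-- Optimism of the clipped optimistic empirical Bellman operator at the true
optimal Q-function: under the span condition and the concentration condition,
`Q* ≤ T̂ Q*` pointwise. -/
theorem bellmanOp_optimism
    {S A : Type*} [Fintype S] [Fintype A] [Nonempty S] [Nonempty A]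
    (γ H U : ℝ) (hγ₀ : 0 < γ) (hγ₁ : γ < 1) (hH : 0 ≤ H) (hU : 0 < U)
    (r : S → A → ℝ) (hr : ∀ s a, r s a ∈ Set.Icc (0 : ℝ) 1)
    (cnt : S → A → ℝ) (hcnt : ∀ s a, 1 ≤ cnt s a)
    (Phat : S → A → S → ℝ)
    (hPnonneg : ∀ s a s', 0 ≤ Phat s a s')
    (hPle : ∀ s a s', Phat s a s' ≤ 1)
    (hPsum : ∀ s a, ∑ s', Phat s a s' = 1)
    (P : S → A → S → ℝ)
    (hPtrueNonneg : ∀ s a s', 0 ≤ P s a s')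
    (hPtrueLe : ∀ s a s', P s a s' ≤ 1)
    (hPtrueSum : ∀ s a, ∑ s', P s a s' = 1)
    (Qstar : S → A → ℝ)
    (hBellman : ∀ s a, Qstar s a = r s a + γ * probDot (P s a) (maxOp Qstar))
    (hspan : Finset.univ.sup' Finset.univ_nonempty (maxOp Qstar)
        - Finset.univ.inf' Finset.univ_nonempty (maxOp Qstar) ≤ H)
    (hconc : ∀ s a,
      |probDot (Phat s a) (maxOp Qstar) - probDot (P s a) (maxOp Qstar)|
        ≤ 2 * Real.sqrt (probVar (Phat s a) (maxOp Qstar) * U / cnt s a)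
          + 14 * H * U / (3 * cnt s a)) :
    ∀ s a, Qstar s a ≤ bellmanOp γ H U r cnt Phat Qstar s a :=
  bellmanOp_optimism_general γ H U hγ₀ hH hU r cnt hcnt Phat P Qstar hBellman hspan hconc
end

section
/- Let S be a positive integer, let c₁, c₂ ≥ 0 be constants with 2c₁² ≤ c₂, and let C ≥ 0. Define f(p, v, n, u) = p·v + max{ c₁·√(𝕍(p,v)·u/n), c₂·C·u/n } for p a probability vector on {1,…,S}, v ∈ [0, 2C]^S, and n, u > 0. Then f is nondecreasing in v: for all probability vectors p on {1,…,S}, all n, u > 0, and all v, v' ∈ [0,2C]^S with v(i) ≥ v'(i) for every i, one has f(p,v,n,u) ≥ f(p,v',n,u). -/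
/-!
Put `δ = p·v - p·v' ≥ 0`. Since `0 ≤ v' ≤ v ≤ 2C`, the second moment can only drop from `v` to
`v'`, while the squared mean drops by `(p·v)² - (p·v')² ≤ 4Cδ`; hence `𝕍(p,v') ≤ 𝕍(p,v) + 4Cδ`.
Writing `β = c₂Cu/n` and `M = f(p,v,n,u) - p·v`, the condition `2c₁² ≤ c₂` turns this into
`c₁²𝕍(p,v')u/n ≤ M² + 2Mδ ≤ (M + δ)²`, so the bonus term grows by at most `δ` when passing from
`v` to `v'`, which is exactly what the mean loses.
-/

open Finset

/-- The function `f(p,v,n,u) = p·v + max{c₁√(𝕍(p,v)u/n), c₂Cu/n}`. -/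
noncomputable def bonusValue {S : Type*} [Fintype S] (c₁ c₂ C : ℝ)
    (p v : S → ℝ) (n u : ℝ) : ℝ :=
  probDot p v + max (c₁ * Real.sqrt (probVar p v * u / n)) (c₂ * C * u / n)

section ProbabilityVector

variable {S : Type*} [Fintype S] {p : S → ℝ}

lemma probDot_le_probDot (hp : ∀ s, 0 ≤ p s) {v v' : S → ℝ} (hvv : ∀ s, v' s ≤ v s) :
    probDot p v' ≤ probDot p v :=
  sum_le_sum fun s _ => mul_le_mul_of_nonneg_left (hvv s) (hp s)

lemma probDot_le_of_forall_le (hp : ∀ s, 0 ≤ p s) (hp₁ : ∑ s, p s = 1) {v : S → ℝ} {b : ℝ}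
    (hv : ∀ s, v s ≤ b) : probDot p v ≤ b := by
  calc probDot p v ≤ ∑ s, p s * b := sum_le_sum fun s _ => mul_le_mul_of_nonneg_left (hv s) (hp s)
    _ = b := by rw [← sum_mul, hp₁, one_mul]

lemma probVar_le_probVar_add (hp : ∀ s, 0 ≤ p s) (hp₁ : ∑ s, p s = 1) {v v' : S → ℝ} {b : ℝ}
    (hv' : ∀ s, 0 ≤ v' s) (hvv : ∀ s, v' s ≤ v s) (hv : ∀ s, v s ≤ b) :
    probVar p v' ≤ probVar p v + 2 * b * (probDot p v - probDot p v') := by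
  have hmoment : ∑ s, p s * v' s ^ 2 ≤ ∑ s, p s * v s ^ 2 :=
    sum_le_sum fun s _ => mul_le_mul_of_nonneg_left (pow_le_pow_left₀ (hv' s) (hvv s) 2) (hp s)
  have hdot := probDot_le_probDot hp hvv
  have hdot_le := probDot_le_of_forall_le hp hp₁ hv
  unfold probVar
  nlinarith [mul_le_mul_of_nonneg_left (by linarith : probDot p v + probDot p v' ≤ 2 * b)
    (sub_nonneg.2 hdot)]

end ProbabilityVector

lemma max_sqrt_le_max_sqrt_add {x x' β δ : ℝ} (hδ : 0 ≤ δ) (h : x' ≤ x + 2 * β * δ) :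
    max √x' β ≤ max √x β + δ := by
  set M := max √x β
  have hM : √x ≤ M := le_max_left _ _
  have hβM : β ≤ M := le_max_right _ _
  have hx : x ≤ M ^ 2 := by
    calc x ≤ √x ^ 2 := by rw [Real.sq_sqrt']; exact le_max_left _ _
      _ ≤ M ^ 2 := pow_le_pow_left₀ (Real.sqrt_nonneg x) hM 2
  have hβ : β * δ ≤ M * δ := mul_le_mul_of_nonneg_right hβM hδ
  refine max_le ((Real.sqrt_le_left (by linarith [Real.sqrt_nonneg x])).2 ?_) (by linarith)
  nlinarith

theorem bonusValue_monotone_general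
    (S : ℕ)
    (c₁ c₂ : ℝ) (hc₁ : 0 ≤ c₁) (hcc : 2 * c₁ ^ 2 ≤ c₂)
    (C : ℝ) (hC : 0 ≤ C)
    (p : Fin S → ℝ) (hpnonneg : ∀ i, 0 ≤ p i)
    (hpsum : ∑ i, p i = 1)
    (n u : ℝ) (hn : 0 < n) (hu : 0 < u)
    (v v' : Fin S → ℝ)
    (hv : ∀ i, v i ∈ Set.Icc (0 : ℝ) (2 * C))
    (hv' : ∀ i, v' i ∈ Set.Icc (0 : ℝ) (2 * C))
    (hvv : ∀ i, v' i ≤ v i) :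
    bonusValue c₁ c₂ C p v' n u ≤ bonusValue c₁ c₂ C p v n u := by
  have hdot := probDot_le_probDot hpnonneg hvv
  have hvar := probVar_le_probVar_add hpnonneg hpsum (fun i => (hv' i).1) hvv (fun i => (hv i).2)
  set δ := probDot p v - probDot p v'
  have hδ : 0 ≤ δ := sub_nonneg.2 hdot
  have hun : 0 ≤ u / n := (div_pos hu hn).le
  have hscaled : c₁ ^ 2 * (probVar p v' * u / n)
      ≤ c₁ ^ 2 * (probVar p v * u / n) + 2 * (c₂ * C * u / n) * δ := by
    have hCδ : 0 ≤ 2 * C * δ * (u / n) := by positivity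
    calc c₁ ^ 2 * (probVar p v' * u / n)
        ≤ c₁ ^ 2 * ((probVar p v + 2 * (2 * C) * δ) * (u / n)) := by
          rw [mul_div_assoc]; gcongr
      _ = c₁ ^ 2 * (probVar p v * u / n) + 2 * c₁ ^ 2 * (2 * C * δ * (u / n)) := by ring
      _ ≤ c₁ ^ 2 * (probVar p v * u / n) + c₂ * (2 * C * δ * (u / n)) := by gcongr
      _ = c₁ ^ 2 * (probVar p v * u / n) + 2 * (c₂ * C * u / n) * δ := by ring
  have hbonus := max_sqrt_le_max_sqrt_add hδ hscaled
  simp only [Real.sqrt_mul (sq_nonneg c₁), Real.sqrt_sq hc₁] at hbonus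
  unfold bonusValue
  linarith

/-- Monotonicity of `f(p,v,n,u) = p·v + max{c₁√(𝕍(p,v)u/n), c₂Cu/n}` in `v`
over `[0, 2C]^S`, when `2c₁² ≤ c₂`. -/
theorem bonusValue_monotone
    (S : ℕ) (hS : 1 ≤ S)
    (c₁ c₂ : ℝ) (hc₁ : 0 ≤ c₁) (hc₂ : 0 ≤ c₂) (hcc : 2 * c₁ ^ 2 ≤ c₂)
    (C : ℝ) (hC : 0 ≤ C)
    (p : Fin S → ℝ) (hpnonneg : ∀ i, 0 ≤ p i) (hple : ∀ i, p i ≤ 1)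
    (hpsum : ∑ i, p i = 1)
    (n u : ℝ) (hn : 0 < n) (hu : 0 < u)
    (v v' : Fin S → ℝ)
    (hv : ∀ i, v i ∈ Set.Icc (0 : ℝ) (2 * C))
    (hv' : ∀ i, v' i ∈ Set.Icc (0 : ℝ) (2 * C))
    (hvv : ∀ i, v' i ≤ v i) :
    bonusValue c₁ c₂ C p v' n u ≤ bonusValue c₁ c₂ C p v n u :=
  bonusValue_monotone_general S c₁ c₂ hc₁ hcc C hC p hpnonneg hpsum n u hn hu v v' hv hv' hvv
end

section
/- Let X be a finite set with |X| = K ≥ 1, let T be a positive integer, and for each t ∈ {1,…,T} let x_t ∈ X and let m_t be a positive integer with m_t ≤ T. Suppose that for every x ∈ X and every integer i ≥ 0, the number of indices t ∈ {1,…,T} with x_t = x and 2^i ≤ m_t ≤ 2^{i+1} − 1 is at most 2^i. Then ∑_{t=1}^T 1/m_t ≤ K·(⌊log₂ T⌋ + 1). -/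
/-!
Group the indices `t` by the pair (label `x t`, dyadic block `⌊log₂ m t⌋`). A block `i` holds at
most `2 ^ i` indices of each label, each contributing at most `1 / 2 ^ i`, so every pair
contributes at most `1`. Since `m t ≤ T`, only the blocks `i ≤ ⌊log₂ T⌋` occur, which leaves
`K (⌊log₂ T⌋ + 1)` pairs.
-/

open Finset

theorem Finset.sum_one_div_le_one_of_card_le {ι : Type*} (s : Finset ι) (m : ι → ℕ) (c : ℕ)
    (hs : #s ≤ c) (hm : ∀ t ∈ s, c ≤ m t) : ∑ t ∈ s, (1 : ℝ) / m t ≤ 1 := by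
  obtain rfl | hc := Nat.eq_zero_or_pos c
  · simp [card_eq_zero.mp (Nat.le_zero.mp hs)]
  calc ∑ t ∈ s, (1 : ℝ) / m t
      ≤ #s • ((1 : ℝ) / c) := sum_le_card_nsmul _ _ _ fun t ht ↦
        one_div_le_one_div_of_le (by positivity) (by exact_mod_cast hm t ht)
    _ ≤ c * ((1 : ℝ) / c) := by
        rw [nsmul_eq_mul]
        gcongr
    _ = 1 := by field_simp

theorem Finset.sum_one_div_le_card_mul_log_add_one {ι α : Type*} [Fintype α] [DecidableEq α]
    {b : ℕ} (hb : 1 < b) (s : Finset ι) (f : ι → α) (m : ι → ℕ) (N : ℕ)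
    (hm : ∀ t ∈ s, 0 < m t ∧ m t ≤ N)
    (hblock : ∀ a i, #{t ∈ s | f t = a ∧ b ^ i ≤ m t ∧ m t < b ^ (i + 1)} ≤ b ^ i) :
    ∑ t ∈ s, (1 : ℝ) / m t ≤ Fintype.card α * (Nat.log b N + 1) := by
  have hmaps : ∀ t ∈ s, (f t, Nat.log b (m t)) ∈ (univ : Finset α) ×ˢ range (Nat.log b N + 1) :=
    fun t ht ↦ by simpa [Nat.lt_succ_iff] using Nat.log_mono_right (hm t ht).2
  have hfiber : ∀ p : α × ℕ,
      ∑ t ∈ s with (f t, Nat.log b (m t)) = p, (1 : ℝ) / m t ≤ 1 := by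
    rintro ⟨a, i⟩
    have hblock_eq : {t ∈ s | (f t, Nat.log b (m t)) = (a, i)} =
        {t ∈ s | f t = a ∧ b ^ i ≤ m t ∧ m t < b ^ (i + 1)} :=
      filter_congr fun t ht ↦ by
        rw [Prod.mk.injEq, Nat.log_eq_iff (Or.inr ⟨hb, (hm t ht).1.ne'⟩)]
    rw [hblock_eq]
    exact sum_one_div_le_one_of_card_le _ _ _ (hblock a i) fun t ht ↦ (mem_filter.mp ht).2.2.1
  calc ∑ t ∈ s, (1 : ℝ) / m t
      = ∑ p ∈ (univ : Finset α) ×ˢ range (Nat.log b N + 1),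
          ∑ t ∈ s with (f t, Nat.log b (m t)) = p, (1 : ℝ) / m t :=
        (sum_fiberwise_of_maps_to hmaps _).symm
    _ ≤ #((univ : Finset α) ×ˢ range (Nat.log b N + 1)) • (1 : ℝ) :=
        sum_le_card_nsmul _ _ _ fun p _ ↦ hfiber p
    _ = Fintype.card α * (Nat.log b N + 1) := by simp

theorem dyadic_inverse_count_sum_general
    {X : Type*} [Fintype X] [DecidableEq X] (K : ℕ) (hK : Fintype.card X = K)
    (T : ℕ)
    (x : ℕ → X) (m : ℕ → ℕ)
    (hm : ∀ t ∈ Finset.Icc 1 T, 1 ≤ m t ∧ m t ≤ T)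
    (hcount : ∀ x₀ : X, ∀ i : ℕ,
      ((Finset.Icc 1 T).filter
        (fun t => x t = x₀ ∧ 2 ^ i ≤ m t ∧ m t ≤ 2 ^ (i + 1) - 1)).card ≤ 2 ^ i) :
    ∑ t ∈ Finset.Icc 1 T, (1 : ℝ) / m t ≤ K * (Nat.log 2 T + 1) := by
  subst hK
  refine sum_one_div_le_card_mul_log_add_one one_lt_two _ x m T hm fun x₀ i ↦ ?_
  convert hcount x₀ i using 2
  refine filter_congr fun t _ ↦ ?_
  rw [Nat.le_sub_one_iff_lt (by positivity)]

/-- Dyadic counting lemma: if each label `x ∈ X` (with `|X| = K`) appears at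
most `2^i` times among indices `t` whose count value `m_t` lies in the dyadic
block `[2^i, 2^{i+1} − 1]`, then `∑_{t=1}^T 1/m_t ≤ K(⌊log₂ T⌋ + 1)`. -/
theorem dyadic_inverse_count_sum
    {X : Type*} [Fintype X] [DecidableEq X] (K : ℕ) (hK : Fintype.card X = K)
    (hK1 : 1 ≤ K) (T : ℕ) (hT : 1 ≤ T)
    (x : ℕ → X) (m : ℕ → ℕ)
    (hm : ∀ t ∈ Finset.Icc 1 T, 1 ≤ m t ∧ m t ≤ T)
    (hcount : ∀ x₀ : X, ∀ i : ℕ,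
      ((Finset.Icc 1 T).filter
        (fun t => x t = x₀ ∧ 2 ^ i ≤ m t ∧ m t ≤ 2 ^ (i + 1) - 1)).card ≤ 2 ^ i) :
    ∑ t ∈ Finset.Icc 1 T, (1 : ℝ) / m t ≤ K * (Nat.log 2 T + 1) :=
  dyadic_inverse_count_sum_general K hK T x m hm hcount
end

section
/- Let X be a finite set with |X| = K ≥ 1, let T be a positive integer, and for each t ∈ {1,…,T} let x_t ∈ X, let m_t be a positive integer with m_t ≤ T, and let w_t ≥ 0 be a real number. Suppose that for every x ∈ X and every integer i ≥ 0, the number of indices t ∈ {1,…,T} with x_t = x and 2^i ≤ m_t ≤ 2^{i+1} − 1 is at most 2^i. Then ∑_{t=1}^T √(w_t/m_t) ≤ √( K·(⌊log₂ T⌋ + 1) · ∑_{t=1}^T w_t ). -/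
/-!
By Cauchy–Schwarz, `(∑ √(w_t / m_t))² ≤ (∑ 1 / m_t) · ∑ w_t`. Grouping the indices by the pair
`(x_t, ⌊log₂ m_t⌋)` gives at most `K (⌊log₂ T⌋ + 1)` groups; the group `(x, i)` has at most `2^i`
members, each with `1 / m_t ≤ 2^(-i)`, so it contributes at most `1` to `∑ 1 / m_t`.
-/

open Finset

lemma Real.sum_sqrt_div_le_sqrt_mul {ι : Type*} (s : Finset ι) (a w : ι → ℝ)
    (ha : ∀ i ∈ s, 0 ≤ a i) (hw : ∀ i ∈ s, 0 ≤ w i) :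
    ∑ i ∈ s, √(w i / a i) ≤ √((∑ i ∈ s, (a i)⁻¹) * ∑ i ∈ s, w i) := by
  calc ∑ i ∈ s, √(w i / a i) = ∑ i ∈ s, √(a i)⁻¹ * √(w i) :=
        sum_congr rfl fun i hi => by
          rw [div_eq_inv_mul, Real.sqrt_mul (inv_nonneg.2 (ha i hi))]
    _ ≤ √(∑ i ∈ s, √(a i)⁻¹ ^ 2) * √(∑ i ∈ s, √(w i) ^ 2) :=
        Real.sum_mul_le_sqrt_mul_sqrt s _ _
    _ = √((∑ i ∈ s, (a i)⁻¹) * ∑ i ∈ s, w i) := by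
        rw [sum_congr rfl fun i hi => Real.sq_sqrt (inv_nonneg.2 (ha i hi)),
          sum_congr rfl fun i hi => Real.sq_sqrt (hw i hi),
          Real.sqrt_mul (sum_nonneg fun i hi => inv_nonneg.2 (ha i hi))]

lemma sum_inv_le_one_of_card_le {ι : Type*} (u : Finset ι) (m : ι → ℕ) {n : ℕ} (hn : 0 < n)
    (hm : ∀ t ∈ u, n ≤ m t) (hcard : #u ≤ n) :
    ∑ t ∈ u, (m t : ℝ)⁻¹ ≤ 1 := by
  calc ∑ t ∈ u, (m t : ℝ)⁻¹ ≤ ∑ _t ∈ u, (n : ℝ)⁻¹ :=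
        sum_le_sum fun t ht => inv_anti₀ (by positivity) (by exact_mod_cast hm t ht)
    _ = #u * (n : ℝ)⁻¹ := by rw [sum_const, nsmul_eq_mul]
    _ ≤ n * (n : ℝ)⁻¹ := by gcongr
    _ = 1 := mul_inv_cancel₀ (by positivity)

lemma sum_inv_le_card_mul_of_dyadic_count {ι X : Type*} [Fintype X] [DecidableEq X]
    (s : Finset ι) (x : ι → X) (m : ι → ℕ) (L : ℕ)
    (hm : ∀ t ∈ s, m t ≠ 0 ∧ Nat.log 2 (m t) ≤ L)
    (hcount : ∀ x₀ : X, ∀ i : ℕ,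
      #(s.filter (fun t => x t = x₀ ∧ 2 ^ i ≤ m t ∧ m t ≤ 2 ^ (i + 1) - 1)) ≤ 2 ^ i) :
    ∑ t ∈ s, (m t : ℝ)⁻¹ ≤ Fintype.card X * (L + 1) := by
  have hmaps : ∀ t ∈ s, (x t, Nat.log 2 (m t)) ∈ (univ : Finset X) ×ˢ range (L + 1) :=
    fun t ht => mem_product.2 ⟨mem_univ _, mem_range.2 (Nat.lt_succ_of_le (hm t ht).2)⟩
  rw [← sum_fiberwise_of_maps_to hmaps]
  calc ∑ p ∈ univ ×ˢ range (L + 1),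
        ∑ t ∈ s with (x t, Nat.log 2 (m t)) = p, (m t : ℝ)⁻¹
      ≤ ∑ _p ∈ (univ : Finset X) ×ˢ range (L + 1), (1 : ℝ) := by
        refine sum_le_sum fun ⟨x₀, i⟩ _ => ?_
        have hfiber : ∀ t ∈ s.filter (fun t => (x t, Nat.log 2 (m t)) = (x₀, i)),
            x t = x₀ ∧ 2 ^ i ≤ m t ∧ m t ≤ 2 ^ (i + 1) - 1 := by
          intro t ht
          simp only [mem_filter, Prod.mk.injEq] at ht
          obtain ⟨hts, rfl, rfl⟩ := ht
          have := Nat.lt_pow_succ_log_self (b := 2) one_lt_two (m t)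
          exact ⟨rfl, Nat.pow_log_le_self 2 (hm t hts).1, by omega⟩
        refine sum_inv_le_one_of_card_le _ m (Nat.two_pow_pos i)
          (fun t ht => (hfiber t ht).2.1) ((card_le_card ?_).trans (hcount x₀ i))
        exact fun t ht => mem_filter.2 ⟨(mem_filter.1 ht).1, hfiber t ht⟩
    _ = Fintype.card X * (L + 1) := by simp

theorem dyadic_weighted_sqrt_sum_general
    {X : Type*} [Fintype X] [DecidableEq X] (K : ℕ) (hK : Fintype.card X = K)
    (T : ℕ)
    (x : ℕ → X) (m : ℕ → ℕ) (w : ℕ → ℝ)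
    (hm : ∀ t ∈ Finset.Icc 1 T, 1 ≤ m t ∧ m t ≤ T)
    (hw : ∀ t ∈ Finset.Icc 1 T, 0 ≤ w t)
    (hcount : ∀ x₀ : X, ∀ i : ℕ,
      ((Finset.Icc 1 T).filter
        (fun t => x t = x₀ ∧ 2 ^ i ≤ m t ∧ m t ≤ 2 ^ (i + 1) - 1)).card ≤ 2 ^ i) :
    ∑ t ∈ Finset.Icc 1 T, Real.sqrt (w t / m t)
      ≤ Real.sqrt ((K * (Nat.log 2 T + 1)) * ∑ t ∈ Finset.Icc 1 T, w t) := by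
  have hharmonic : ∑ t ∈ Icc 1 T, (m t : ℝ)⁻¹ ≤ K * (Nat.log 2 T + 1) := by
    subst hK
    exact sum_inv_le_card_mul_of_dyadic_count _ x m _
      (fun t ht => ⟨Nat.one_le_iff_ne_zero.1 (hm t ht).1, Nat.log_mono_right (hm t ht).2⟩)
      hcount
  calc ∑ t ∈ Icc 1 T, √(w t / m t)
      ≤ √((∑ t ∈ Icc 1 T, (m t : ℝ)⁻¹) * ∑ t ∈ Icc 1 T, w t) :=
        Real.sum_sqrt_div_le_sqrt_mul _ _ _ (fun t _ => Nat.cast_nonneg _) hw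
    _ ≤ √((K * (Nat.log 2 T + 1)) * ∑ t ∈ Icc 1 T, w t) := by
        gcongr
        exact sum_nonneg hw

/-- Weighted dyadic counting lemma: under the same dyadic visitation condition
as the unweighted version, for any nonnegative weights `w_t`,
`∑_{t=1}^T √(w_t/m_t) ≤ √(K(⌊log₂ T⌋ + 1)·∑_{t=1}^T w_t)`. -/
theorem dyadic_weighted_sqrt_sum
    {X : Type*} [Fintype X] [DecidableEq X] (K : ℕ) (hK : Fintype.card X = K)
    (hK1 : 1 ≤ K) (T : ℕ) (hT : 1 ≤ T)
    (x : ℕ → X) (m : ℕ → ℕ) (w : ℕ → ℝ)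
    (hm : ∀ t ∈ Finset.Icc 1 T, 1 ≤ m t ∧ m t ≤ T)
    (hw : ∀ t ∈ Finset.Icc 1 T, 0 ≤ w t)
    (hcount : ∀ x₀ : X, ∀ i : ℕ,
      ((Finset.Icc 1 T).filter
        (fun t => x t = x₀ ∧ 2 ^ i ≤ m t ∧ m t ≤ 2 ^ (i + 1) - 1)).card ≤ 2 ^ i) :
    ∑ t ∈ Finset.Icc 1 T, Real.sqrt (w t / m t)
      ≤ Real.sqrt ((K * (Nat.log 2 T + 1)) * ∑ t ∈ Finset.Icc 1 T, w t) :=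
  dyadic_weighted_sqrt_sum_general K hK T x m w hm hw hcount
end
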